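/- arXiv:1803.00843 — 5 statements merged into one kernel-verified Lean document; each statement's English description precedes it below -/
import Mathlib

section
/- For all integers n, k with 0 < k < n+1, the number of linear extensions of the (n,k)-arch process satisfies the lower bound σ(A_{n,k}) ≥ n!/(n−k)!. -/
def archRel (n k : ℕ) (x y : Fin (n + 2*k)) : Prop :=
  ((x:ℕ) < n + k ∧ (y:ℕ) < n + k ∧ (x:ℕ) < (y:ℕ))
  ∨ (∃ i < k, (x:ℕ) = i ∧ (y:ℕ) = n + k + i)
  ∨ (∃ i < k, (x:ℕ) = n + k + i ∧ (y:ℕ) = n + i)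

noncomputable def archRuns (n k : ℕ) : ℕ :=
  Nat.card {f : Equiv.Perm (Fin (n + 2*k)) // ∀ x y, archRel n k x y → f x < f y}

namespace ArchAux

variable {n k : ℕ}

/-- The trunk position right after which `b_i` is inserted. -/
def g (t : Fin k → Fin n) (i : Fin k) : ℕ := (t i : ℕ) + (i : ℕ)

/-- Number of arch elements inserted strictly before trunk element `u`. -/
def A (t : Fin k → Fin n) (u : ℕ) : ℕ :=
  (Finset.univ.filter (fun j : Fin k => g t j < u)).card

/-- Number of arch elements inserted strictly before `b_i`. -/
def B (t : Fin k → Fin n) (i : Fin k) : ℕ :=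
  (Finset.univ.filter
    (fun j : Fin k => g t j < g t i ∨ (g t j = g t i ∧ (j:ℕ) < (i:ℕ)))).card

/-- Final position of the arch element `b_i`. -/
def bval (t : Fin k → Fin n) (i : Fin k) : ℕ := g t i + 1 + B t i

/-- Final position of a generic element (trunk `x` for `x < n + k`,
arch element `b_{x-(n+k)}` otherwise). -/
def F (t : Fin k → Fin n) (x : ℕ) : ℕ :=
  if x < n + k then x + A t x
  else if h : x - (n + k) < k then bval t ⟨x - (n + k), h⟩ else 0

lemma g_lt (t : Fin k → Fin n) (i : Fin k) : g t i + 1 < n + k := by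
  have h1 := (t i).isLt
  have h2 := i.isLt
  unfold g; omega

lemma A_le (t : Fin k → Fin n) (u : ℕ) : A t u ≤ k := by
  have := Finset.card_filter_le (Finset.univ : Finset (Fin k))
    (fun j => g t j < u)
  simpa [A] using this

lemma i_notMemB (t : Fin k → Fin n) (i : Fin k) :
    i ∉ Finset.univ.filter
      (fun j : Fin k => g t j < g t i ∨ (g t j = g t i ∧ (j:ℕ) < (i:ℕ))) := by
  simp

lemma B_lt (t : Fin k → Fin n) (i : Fin k) : B t i < k := by
  have hne : Finset.univ.filter
      (fun j : Fin k => g t j < g t i ∨ (g t j = g t i ∧ (j:ℕ) < (i:ℕ)))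
      ≠ Finset.univ := by
    intro h
    have := i_notMemB t i
    rw [h] at this
    exact this (Finset.mem_univ i)
  have hss := Finset.ssubset_univ_iff.mpr hne
  have := Finset.card_lt_card hss
  simpa [B] using this

lemma lem_tt (t : Fin k → Fin n) {u v : ℕ} (h : u < v) :
    u + A t u < v + A t v := by
  have hA : A t u ≤ A t v := by
    apply Finset.card_le_card
    intro j hj
    simp only [Finset.mem_filter, Finset.mem_univ, true_and] at hj ⊢
    omega
  omega

lemma lem_tb (t : Fin k → Fin n) {u : ℕ} {i : Fin k} (h : u ≤ g t i) :
    u + A t u < bval t i := by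
  have hAB : A t u ≤ B t i := by
    apply Finset.card_le_card
    intro j hj
    simp only [Finset.mem_filter, Finset.mem_univ, true_and] at hj ⊢
    omega
  unfold bval; omega

lemma lem_bt (t : Fin k → Fin n) {u : ℕ} {i : Fin k} (h : g t i < u) :
    bval t i < u + A t u := by
  have hsub : insert i (Finset.univ.filter
      (fun j : Fin k => g t j < g t i ∨ (g t j = g t i ∧ (j:ℕ) < (i:ℕ))))
      ⊆ Finset.univ.filter (fun j : Fin k => g t j < u) := by
    intro j hj
    rcases Finset.mem_insert.mp hj with hj | hj
    · subst hj
      simp only [Finset.mem_filter, Finset.mem_univ, true_and]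
      omega
    · simp only [Finset.mem_filter, Finset.mem_univ, true_and] at hj ⊢
      omega
  have hcard := Finset.card_le_card hsub
  rw [Finset.card_insert_of_notMem (i_notMemB t i)] at hcard
  have : B t i + 1 ≤ A t u := hcard
  unfold bval; omega

lemma lem_bb (t : Fin k → Fin n) {i j : Fin k}
    (h : g t i < g t j ∨ (g t i = g t j ∧ (i:ℕ) < (j:ℕ))) :
    bval t i < bval t j := by
  have hsub : insert i (Finset.univ.filter
      (fun m : Fin k => g t m < g t i ∨ (g t m = g t i ∧ (m:ℕ) < (i:ℕ))))
      ⊆ Finset.univ.filter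
      (fun m : Fin k => g t m < g t j ∨ (g t m = g t j ∧ (m:ℕ) < (j:ℕ))) := by
    intro m hm
    rcases Finset.mem_insert.mp hm with hm | hm
    · subst hm
      simp only [Finset.mem_filter, Finset.mem_univ, true_and]
      omega
    · simp only [Finset.mem_filter, Finset.mem_univ, true_and] at hm ⊢
      omega
  have hcard := Finset.card_le_card hsub
  rw [Finset.card_insert_of_notMem (i_notMemB t i)] at hcard
  have hB : B t i + 1 ≤ B t j := hcard
  have hg : g t i ≤ g t j := by omega
  unfold bval; omega

lemma F_trunk (t : Fin k → Fin n) {x : ℕ} (h : x < n + k) :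
    F t x = x + A t x := if_pos h

lemma F_b (t : Fin k → Fin n) (i : Fin k) :
    F t (n + k + (i : ℕ)) = bval t i := by
  have h1 : ¬ (n + k + (i : ℕ) < n + k) := by omega
  have h2 : n + k + (i : ℕ) - (n + k) = (i : ℕ) := by omega
  have h3 : (i : ℕ) < k := i.isLt
  rw [F, if_neg h1]
  rw [dif_pos (by omega : n + k + (i : ℕ) - (n + k) < k)]
  congr 1
  apply Fin.ext
  simp

lemma F_lt_bound (t : Fin k → Fin n) (x : ℕ) (hx : x < n + 2 * k) :
    F t x < n + 2 * k := by
  by_cases h : x < n + k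
  · rw [F_trunk t h]
    have := A_le t x
    omega
  · have hi : x - (n + k) < k := by omega
    have hx' : x = n + k + ((⟨x - (n + k), hi⟩ : Fin k) : ℕ) := by simp; omega
    rw [hx', F_b t ⟨x - (n + k), hi⟩]
    have h1 := g_lt t ⟨x - (n + k), hi⟩
    have h2 := B_lt t ⟨x - (n + k), hi⟩
    unfold bval; omega

/-- The linear extension as a function on `Fin (n + 2*k)`. -/
def ffun (t : Fin k → Fin n) (x : Fin (n + 2 * k)) : Fin (n + 2 * k) :=
  ⟨F t x, F_lt_bound t x x.isLt⟩

lemma ffun_inj (t : Fin k → Fin n) : Function.Injective (ffun t) := by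
  intro x y h
  have hF : F t (x : ℕ) = F t (y : ℕ) := congrArg Fin.val h
  apply Fin.ext
  by_cases hx : (x : ℕ) < n + k <;> by_cases hy : (y : ℕ) < n + k
  · -- trunk / trunk
    rw [F_trunk t hx, F_trunk t hy] at hF
    rcases lt_trichotomy (x : ℕ) (y : ℕ) with h' | h' | h'
    · have := lem_tt t h'; omega
    · exact h'
    · have := lem_tt t h'; omega
  · -- trunk / arch
    exfalso
    have hj : (y : ℕ) - (n + k) < k := by have := y.isLt; omega
    set j : Fin k := ⟨(y : ℕ) - (n + k), hj⟩
    have hy' : (y : ℕ) = n + k + (j : ℕ) := by simp [j]; omega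
    rw [F_trunk t hx, hy', F_b t j] at hF
    by_cases hc : (x : ℕ) ≤ g t j
    · have := lem_tb t hc; omega
    · have := lem_bt t (i := j) (u := (x : ℕ)) (by omega); omega
  · -- arch / trunk
    exfalso
    have hi : (x : ℕ) - (n + k) < k := by have := x.isLt; omega
    set i : Fin k := ⟨(x : ℕ) - (n + k), hi⟩
    have hx' : (x : ℕ) = n + k + (i : ℕ) := by simp [i]; omega
    rw [hx', F_b t i, F_trunk t hy] at hF
    by_cases hc : (y : ℕ) ≤ g t i
    · have := lem_tb t hc; omega
    · have := lem_bt t (i := i) (u := (y : ℕ)) (by omega); omega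
  · -- arch / arch
    have hi : (x : ℕ) - (n + k) < k := by have := x.isLt; omega
    have hj : (y : ℕ) - (n + k) < k := by have := y.isLt; omega
    set i : Fin k := ⟨(x : ℕ) - (n + k), hi⟩
    set j : Fin k := ⟨(y : ℕ) - (n + k), hj⟩
    have hx' : (x : ℕ) = n + k + (i : ℕ) := by simp [i]; omega
    have hy' : (y : ℕ) = n + k + (j : ℕ) := by simp [j]; omega
    rw [hx', F_b t i, hy', F_b t j] at hF
    have hij : (i : ℕ) = (j : ℕ) := by
      by_contra hne
      rcases lt_trichotomy (g t i) (g t j) with h' | h' | h'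
      · have := lem_bb t (i := i) (j := j) (Or.inl h'); omega
      · rcases lt_trichotomy (i : ℕ) (j : ℕ) with h'' | h'' | h''
        · have := lem_bb t (i := i) (j := j) (Or.inr ⟨h', h''⟩); omega
        · exact hne h''
        · have := lem_bb t (i := j) (j := i) (Or.inr ⟨h'.symm, h''⟩); omega
      · have := lem_bb t (i := j) (j := i) (Or.inl h'); omega
    omega

/-- The linear extension as a permutation. -/
noncomputable def perm (t : Fin k → Fin n) : Equiv.Perm (Fin (n + 2 * k)) :=
  Equiv.ofBijective (ffun t) ((Finite.injective_iff_bijective).mp (ffun_inj t))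

lemma perm_apply (t : Fin k → Fin n) (x : Fin (n + 2 * k)) :
    perm t x = ffun t x := rfl

lemma perm_spec (t : Fin k → Fin n) :
    ∀ x y, archRel n k x y → perm t x < perm t y := by
  intro x y h
  rw [Fin.lt_def, perm_apply, perm_apply]
  show F t (x : ℕ) < F t (y : ℕ)
  rcases h with ⟨hx, hy, hxy⟩ | ⟨i, hik, hx, hy⟩ | ⟨i, hik, hx, hy⟩
  · rw [F_trunk t hx, F_trunk t hy]
    exact lem_tt t hxy
  · -- a_i < b_i
    have hxnk : (x : ℕ) < n + k := by omega
    have : (y : ℕ) = n + k + ((⟨i, hik⟩ : Fin k) : ℕ) := by simpa using hy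
    rw [F_trunk t hxnk, this, F_b t ⟨i, hik⟩]
    apply lem_tb
    show (x : ℕ) ≤ (t ⟨i, hik⟩ : ℕ) + ((⟨i, hik⟩ : Fin k) : ℕ)
    simp
    omega
  · -- b_i < c_i
    have hynk : (y : ℕ) < n + k := by omega
    have : (x : ℕ) = n + k + ((⟨i, hik⟩ : Fin k) : ℕ) := by simpa using hx
    rw [this, F_b t ⟨i, hik⟩, F_trunk t hynk]
    apply lem_bt
    show (t ⟨i, hik⟩ : ℕ) + ((⟨i, hik⟩ : Fin k) : ℕ) < (y : ℕ)
    have := (t ⟨i, hik⟩).isLt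
    simp
    omega

lemma g_eq_of_eqs {t s : Fin k → Fin n}
    (hA : ∀ u, u < n + k → A t u = A s u)
    (i : Fin k) (hb : bval t i = bval s i) : g s i ≤ g t i := by
  by_contra hlt
  push_neg at hlt
  -- u := g t i + 1
  have hu : g t i + 1 < n + k := g_lt t i
  have h1 : bval t i < (g t i + 1) + A t (g t i + 1) :=
    lem_bt t (by omega)
  rw [hb, hA _ hu] at h1
  have h2 : (g t i + 1) + A s (g t i + 1) < bval s i :=
    lem_tb s (by omega)
  omega

lemma perm_injective :
    Function.Injective (perm : (Fin k → Fin n) → Equiv.Perm (Fin (n + 2 * k))) := by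
  intro t s h
  have hF : ∀ x : ℕ, x < n + 2 * k → F t x = F s x := by
    intro x hx
    have := congrArg (fun e : Equiv.Perm (Fin (n + 2 * k)) => e ⟨x, hx⟩) h
    exact congrArg Fin.val this
  have hA : ∀ u, u < n + k → A t u = A s u := by
    intro u hu
    have h1 := hF u (by omega)
    rw [F_trunk t hu, F_trunk s hu] at h1
    omega
  have hb : ∀ i : Fin k, bval t i = bval s i := by
    intro i
    have hlt : n + k + (i : ℕ) < n + 2 * k := by have := i.isLt; omega
    have h1 := hF (n + k + (i : ℕ)) hlt
    rwa [F_b t i, F_b s i] at h1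
  have hg : ∀ i : Fin k, g t i = g s i := by
    intro i
    have h1 := g_eq_of_eqs hA i (hb i)
    have h2 := g_eq_of_eqs (fun u hu => (hA u hu).symm) i (hb i).symm
    omega
  funext i
  have := hg i
  unfold g at this
  exact Fin.ext (by omega)

end ArchAux

lemma arch_pow_le (n k : ℕ) : n ^ k ≤ archRuns n k := by
  classical
  rw [archRuns]
  have hcard : Nat.card (Fin k → Fin n) = n ^ k := by
    simp [Nat.card_eq_fintype_card]
  rw [← hcard]
  apply Nat.card_le_card_of_injective
    (fun t => (⟨ArchAux.perm t, ArchAux.perm_spec t⟩ :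
      {f : Equiv.Perm (Fin (n + 2*k)) // ∀ x y, archRel n k x y → f x < f y}))
  intro t s hts
  exact ArchAux.perm_injective (congrArg Subtype.val hts)

/-- Lower bound: `σ(A_{n,k}) ≥ n!/(n-k)!` for `0 < k < n+1`. -/
theorem arch_runs_lower (n k : ℕ) (hk : 0 < k) (hkn : k < n + 1) :
    n.factorial / (n - k).factorial ≤ archRuns n k := by
  have hkn' : k ≤ n := by omega
  have h1 : n.factorial / (n - k).factorial = n.descFactorial k :=
    (Nat.descFactorial_eq_div hkn').symm
  have h2 : n.descFactorial k ≤ n ^ k := by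
    induction k with
    | zero => simp
    | succ m ih =>
      rw [Nat.descFactorial_succ, pow_succ]
      have : n.descFactorial m ≤ n ^ m := by
        exact Nat.descFactorial_le_pow n m
      calc (n - m) * n.descFactorial m ≤ n * n ^ m :=
            Nat.mul_le_mul (Nat.sub_le n m) this
        _ = n ^ m * n := by ring
  exact le_trans (h1 ▸ h2) (arch_pow_le n k)
end

section
/- For all integers n, k with 0 < k < n+1, the number of linear extensions of the (n,k)-arch process satisfies the upper bound σ(A_{n,k}) ≤ (n+2k−1)!/(n+k−1)!. -/
/-- Upper bound: `σ(A_{n,k}) ≤ (n+2k-1)!/(n+k-1)!` for `0 < k < n+1`. -/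
theorem arch_runs_upper (n k : ℕ) (hk : 0 < k) (hkn : k < n + 1) :
    archRuns n k ≤ (n + 2*k - 1).factorial / (n + k - 1).factorial := by
  classical
  set S := {f : Equiv.Perm (Fin (n + 2*k)) // ∀ x y, archRel n k x y → f x < f y} with hS
  have hidx : ∀ i : Fin k, n + k + (i : ℕ) < n + 2*k := fun i => by
    have := i.2; omega
  -- the value of f at a b-index is < n + 2k - 1
  have hval : ∀ (f : Equiv.Perm (Fin (n + 2*k))),
      (∀ x y, archRel n k x y → f x < f y) → ∀ i : Fin k,
      (f ⟨n + k + i, hidx i⟩ : ℕ) < n + 2*k - 1 := by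
    intro f hf i
    have hy : n + (i : ℕ) < n + 2*k := by have := i.2; omega
    have h3 : (f ⟨n + k + i, hidx i⟩ : ℕ) < (f ⟨n + i, hy⟩ : ℕ) :=
      hf ⟨n + k + i, hidx i⟩ ⟨n + i, hy⟩ (Or.inr (Or.inr ⟨i, i.2, rfl, rfl⟩))
    have h2 : (f ⟨n + i, hy⟩ : ℕ) < n + 2*k := (f ⟨n + i, hy⟩).2
    omega
  -- the injection into embeddings
  let Φ : S → (Fin k ↪ Fin (n + 2*k - 1)) := fun f =>
    ⟨fun i => ⟨((f : Equiv.Perm (Fin (n + 2*k))) ⟨n + k + i, hidx i⟩ : ℕ),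
        hval f.1 f.2 i⟩,
     by
      intro i j hij
      have hv := congrArg Fin.val hij
      have h1 : ((f : Equiv.Perm (Fin (n + 2*k))) ⟨n + k + i, hidx i⟩)
          = (f : Equiv.Perm (Fin (n + 2*k))) ⟨n + k + j, hidx j⟩ := Fin.ext hv
      have h2 := (f : Equiv.Perm (Fin (n + 2*k))).injective h1
      have h3 : n + k + (i : ℕ) = n + k + (j : ℕ) := congrArg Fin.val h2
      exact Fin.ext (by omega)⟩
  have hle : n + k ≤ n + 2*k := by omega
  have hΦ : Function.Injective Φ := by
    rintro ⟨f, hf⟩ ⟨g, hg⟩ hfg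
    have hb : ∀ i : Fin k, f ⟨n + k + i, hidx i⟩ = g ⟨n + k + i, hidx i⟩ := by
      intro i
      have := congrArg (fun e => ((e : Fin k ↪ Fin (n + 2*k - 1)) i : ℕ)) hfg
      exact Fin.ext this
    -- strictly monotone restrictions to first n+k indices
    set F : Fin (n + k) → Fin (n + 2*k) := fun j => f (Fin.castLE hle j) with hF
    set G : Fin (n + k) → Fin (n + 2*k) := fun j => g (Fin.castLE hle j) with hG
    have hFm : StrictMono F := by
      intro a b hab
      refine hf _ _ (Or.inl ⟨?_, ?_, ?_⟩) <;> simp [a.2, b.2, hab]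
    have hGm : StrictMono G := by
      intro a b hab
      refine hg _ _ (Or.inl ⟨?_, ?_, ?_⟩) <;> simp [a.2, b.2, hab]
    -- characterize membership in ranges
    have hrangeF : ∀ y : Fin (n + 2*k), y ∈ Set.range F ↔ ((f.symm y : ℕ) < n + k) := by
      intro y
      constructor
      · rintro ⟨j, rfl⟩
        rw [hF]
        simp only [Equiv.symm_apply_apply, Fin.coe_castLE]
        exact j.2
      · intro hy
        refine ⟨⟨(f.symm y : ℕ), hy⟩, ?_⟩
        have h3 : Fin.castLE hle ⟨(f.symm y : ℕ), hy⟩ = f.symm y := Fin.ext (by simp)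
        show f (Fin.castLE hle ⟨(f.symm y : ℕ), hy⟩) = y
        rw [h3, f.apply_symm_apply]
    have hrangeG : ∀ y : Fin (n + 2*k), y ∈ Set.range G ↔ ((g.symm y : ℕ) < n + k) := by
      intro y
      constructor
      · rintro ⟨j, rfl⟩
        rw [hG]
        simp only [Equiv.symm_apply_apply, Fin.coe_castLE]
        exact j.2
      · intro hy
        refine ⟨⟨(g.symm y : ℕ), hy⟩, ?_⟩
        have h3 : Fin.castLE hle ⟨(g.symm y : ℕ), hy⟩ = g.symm y := Fin.ext (by simp)
        show g (Fin.castLE hle ⟨(g.symm y : ℕ), hy⟩) = y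
        rw [h3, g.apply_symm_apply]
    -- a value y with f.symm y ≥ n+k is a b-value, hence same for g
    have key : ∀ y : Fin (n + 2*k), ((f.symm y : ℕ) < n + k) ↔ ((g.symm y : ℕ) < n + k) := by
      intro y
      constructor
      · intro hfy
        by_contra hgy
        push_neg at hgy
        have h2 : (g.symm y : ℕ) < n + 2*k := (g.symm y).2
        set i : Fin k := ⟨(g.symm y : ℕ) - (n + k), by omega⟩ with hi
        have hsy : (⟨n + k + i, hidx i⟩ : Fin (n + 2*k)) = g.symm y := Fin.ext (by
          show n + k + ((g.symm y : ℕ) - (n + k)) = (g.symm y : ℕ); omega)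
        have h4 : g ⟨n + k + i, hidx i⟩ = y := by rw [hsy, g.apply_symm_apply]
        have hfy' : f ⟨n + k + i, hidx i⟩ = y := by rw [hb i, h4]
        have h5 : f.symm y = ⟨n + k + i, hidx i⟩ := by rw [← hfy', f.symm_apply_apply]
        rw [h5] at hfy
        simp only at hfy
        omega
      · intro hgy
        by_contra hfy
        push_neg at hfy
        have h2 : (f.symm y : ℕ) < n + 2*k := (f.symm y).2
        set i : Fin k := ⟨(f.symm y : ℕ) - (n + k), by omega⟩ with hi
        have hsy : (⟨n + k + i, hidx i⟩ : Fin (n + 2*k)) = f.symm y := Fin.ext (by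
          show n + k + ((f.symm y : ℕ) - (n + k)) = (f.symm y : ℕ); omega)
        have h4 : f ⟨n + k + i, hidx i⟩ = y := by rw [hsy, f.apply_symm_apply]
        have hgy' : g ⟨n + k + i, hidx i⟩ = y := by rw [← hb i, h4]
        have h5 : g.symm y = ⟨n + k + i, hidx i⟩ := by rw [← hgy', g.symm_apply_apply]
        rw [h5] at hgy
        simp only at hgy
        omega
    have hrange : Set.range F = Set.range G := by
      ext y
      rw [hrangeF y, hrangeG y]
      exact key y
    haveI : WellFoundedLT (Fin (n + k)) := inferInstance
    have hFG : F = G := (hFm.range_inj hGm).mp hrange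
    -- conclude f = g
    have hfg' : f = g := by
      apply Equiv.ext
      intro x
      by_cases hx : (x : ℕ) < n + k
      · have h6 := congrFun hFG ⟨(x : ℕ), hx⟩
        rw [hF, hG] at h6
        simp only at h6
        have h7 : Fin.castLE hle ⟨(x : ℕ), hx⟩ = x := Fin.ext (by simp)
        rwa [h7] at h6
      · push_neg at hx
        have h2 : (x : ℕ) < n + 2*k := x.2
        set i : Fin k := ⟨(x : ℕ) - (n + k), by omega⟩ with hi
        have hxeq : x = ⟨n + k + i, hidx i⟩ := Fin.ext (by
          show (x : ℕ) = n + k + ((x : ℕ) - (n + k)); omega)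
        rw [hxeq]; exact hb i
    exact Subtype.ext hfg'
  -- count: embeddings Fin k ↪ Fin (n+2k-1)
  have hcard : archRuns n k ≤ Nat.card (Fin k ↪ Fin (n + 2*k - 1)) :=
    Nat.card_le_card_of_injective Φ hΦ
  have hcard2 : Nat.card (Fin k ↪ Fin (n + 2*k - 1)) = (n + 2*k - 1).descFactorial k := by
    rw [Nat.card_eq_fintype_card, Fintype.card_embedding_eq, Fintype.card_fin, Fintype.card_fin]
  have hdesc : (n + 2*k - 1).descFactorial k
      = (n + 2*k - 1).factorial / (n + k - 1).factorial := by
    rw [Nat.descFactorial_eq_div (by omega)]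
    have h8 : n + 2*k - 1 - k = n + k - 1 := by omega
    rw [h8]
  calc archRuns n k ≤ Nat.card (Fin k ↪ Fin (n + 2*k - 1)) := hcard
    _ = (n + 2*k - 1).factorial / (n + k - 1).factorial := by rw [hcard2, hdesc]
end

section
/- The bivariate generating function A(z,u) = Σ_{n≥0,k≥0} (t_{n,k}/k!)·z^n·u^k, where t satisfies t_{n,0}=1 and 2·t_{n,k} = (n+2k−1)·t_{n,k−1} + (n−k)·t_{n+1,k−1} for all n ≥ 0, k ≥ 1, satisfies (as a formal power series identity) (2zu − 2z − u)·∂A/∂u + (z−2)·A + z(z+1)·∂A/∂z + C(u) = 0, where C(u) = u·∂A/∂u(0,u) + 2·A(0,u). -/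
def t : ℕ → ℕ → ℚ
  | _, 0 => 1
  | n, k+1 => (((n:ℚ) + 2*(k+1) - 1) * t n k + ((n:ℚ) - (k+1)) * t (n+1) k) / 2

/-- The bivariate generating function `A(z,u) = Σ (t_{n,k}/k!) z^n u^k`
(ordinary in `z`, exponential in `u`), as a formal power series in the two
variables `z` (index `0`) and `u` (index `1`). -/
noncomputable def A : MvPowerSeries (Fin 2) ℚ :=
  fun m => t (m 0) (m 1) / (Nat.factorial (m 1))

/-- Formal partial derivative `∂/∂z` of a bivariate power series. -/
noncomputable def dz (F : MvPowerSeries (Fin 2) ℚ) : MvPowerSeries (Fin 2) ℚ :=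
  fun m => ((m 0 : ℚ) + 1) * F (m + Finsupp.single 0 1)

/-- Formal partial derivative `∂/∂u` of a bivariate power series. -/
noncomputable def du (F : MvPowerSeries (Fin 2) ℚ) : MvPowerSeries (Fin 2) ℚ :=
  fun m => ((m 1 : ℚ) + 1) * F (m + Finsupp.single 1 1)

/-- Specialization at `z = 0` (viewed again as a bivariate series involving only `u`). -/
noncomputable def specZ (F : MvPowerSeries (Fin 2) ℚ) : MvPowerSeries (Fin 2) ℚ :=
  fun m => if m 0 = 0 then F m else 0

noncomputable def z : MvPowerSeries (Fin 2) ℚ := MvPowerSeries.X 0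
noncomputable def u : MvPowerSeries (Fin 2) ℚ := MvPowerSeries.X 1

lemma t_rec (n k : ℕ) : 2 * t n (k+1) = ((n:ℚ) + 2*k + 1) * t n k + ((n:ℚ) - k - 1) * t (n+1) k := by
  rw [t]; push_cast; ring

lemma fact_cast (k : ℕ) : ((k+1).factorial : ℚ) = (k+1) * k.factorial := by
  rw [Nat.factorial_succ]; push_cast; ring

/-- `C(u) = u·∂A/∂u(0,u) + 2·A(0,u)`. -/
noncomputable def Cu : MvPowerSeries (Fin 2) ℚ := u * specZ (du A) + 2 * specZ A

lemma cz (F : MvPowerSeries (Fin 2) ℚ) (m : Fin 2 →₀ ℕ) :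
    MvPowerSeries.coeff m (z * F) =
      if m 0 = 0 then 0 else MvPowerSeries.coeff (m - Finsupp.single 0 1) F := by
  rw [z, MvPowerSeries.X_def, MvPowerSeries.coeff_monomial_mul]
  by_cases h : m 0 = 0
  · simp [h, Finsupp.single_le_iff]
  · simp [h, Finsupp.single_le_iff, Nat.one_le_iff_ne_zero]

lemma cu (F : MvPowerSeries (Fin 2) ℚ) (m : Fin 2 →₀ ℕ) :
    MvPowerSeries.coeff m (u * F) =
      if m 1 = 0 then 0 else MvPowerSeries.coeff (m - Finsupp.single 1 1) F := by
  rw [u, MvPowerSeries.X_def, MvPowerSeries.coeff_monomial_mul]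
  by_cases h : m 1 = 0
  · simp [h, Finsupp.single_le_iff]
  · simp [h, Finsupp.single_le_iff, Nat.one_le_iff_ne_zero]


set_option maxHeartbeats 1000000 in
/-- The holonomic differential equation
`(2zu − 2z − u)·∂A/∂u + (z−2)·A + z(z+1)·∂A/∂z + C(u) = 0`. -/
theorem A_differential_equation :
    (2*z*u - 2*z - u) * du A + (z - 2) * A + z * (z + 1) * dz A + Cu = 0 := by
  have hL : (2*z*u - 2*z - u) * du A + (z - 2) * A + z * (z + 1) * dz A + Cu
      = (z*(u*(du A)) + z*(u*(du A))) - (z*(du A) + z*(du A)) - u*(du A)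
        + z*A - (A + A) + z*(z*(dz A)) + z*(dz A)
        + (u * specZ (du A) + (specZ A + specZ A)) := by
    rw [Cu]; ring
  rw [hL]
  ext m
  simp only [map_add, map_sub, cz, cu, map_zero]
  simp only [MvPowerSeries.coeff_apply, du, dz, A, specZ, Finsupp.sub_apply,
    Finsupp.add_apply, Finsupp.single_apply]
  norm_num
  generalize m 0 = a
  generalize m 1 = b
  rcases a with _ | (_ | p) <;> rcases b with _ | c <;>
    simp only [Nat.succ_sub_one, Nat.add_sub_cancel, if_true, if_false, Nat.succ_ne_zero,
      reduceIte, Nat.factorial_zero, zero_add] <;>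
    push_cast [fact_cast] <;>
    try ring
  all_goals try ring_nf
  · -- a = 1, b = 0
    have h := t_rec 0 0
    norm_num [Nat.factorial] at h ⊢
    linarith
  · -- a = 1, b = c+1
    have hcf : (0:ℚ) < c.factorial := by exact_mod_cast c.factorial_pos
    have d1 : ((c:ℚ) * c.factorial + c.factorial) ≠ 0 := by nlinarith [Nat.cast_nonneg (α := ℚ) c]
    have d2 : ((c:ℚ) * c.factorial * 3 + (c:ℚ)^2 * c.factorial + c.factorial * 2) ≠ 0 := by
      nlinarith [Nat.cast_nonneg (α := ℚ) c, sq_nonneg (c:ℚ)]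
    have h := t_rec 0 (c+1)
    rw [show c+1+1 = 2+c by omega, show c+1 = 1+c by omega] at h
    push_cast at h
    have h2 : t 0 (2+c) = ((0 + 2*(1+(c:ℚ)) + 1) * t 0 (1+c) + (0 - (1+(c:ℚ)) - 1) * t 1 (1+c))/2 := by
      linarith
    rw [h2, show (c:ℚ) * c.factorial + c.factorial = ((c:ℚ)+1)*c.factorial by ring,
      show (c:ℚ) * c.factorial * 3 + (c:ℚ)^2 * c.factorial + (c.factorial:ℚ) * 2
        = ((c:ℚ)+1)*((c:ℚ)+2)*c.factorial by ring]
    field_simp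
    ring
  · -- a = p+2, b = 0
    have h := t_rec (1+p) 0
    rw [show 1+p+1 = 2+p by omega] at h
    push_cast at h
    norm_num [Nat.factorial] at h ⊢
    linear_combination (-1:ℚ) * h
  · -- a = p+2, b = c+1
    have hcf : (0:ℚ) < c.factorial := by exact_mod_cast c.factorial_pos
    have d1 : ((c:ℚ) * c.factorial + c.factorial) ≠ 0 := by nlinarith [Nat.cast_nonneg (α := ℚ) c]
    have d2 : ((c:ℚ) * c.factorial * 3 + (c:ℚ)^2 * c.factorial + c.factorial * 2) ≠ 0 := by
      nlinarith [Nat.cast_nonneg (α := ℚ) c, sq_nonneg (c:ℚ)]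
    have h := t_rec (1+p) (c+1)
    rw [show c+1+1 = 2+c by omega, show c+1 = 1+c by omega, show 1+p+1 = 2+p by omega] at h
    push_cast at h
    have h2 : t (1+p) (2+c) = ((1+(p:ℚ) + 2*(1+(c:ℚ)) + 1) * t (1+p) (1+c) + (1+(p:ℚ) - (1+(c:ℚ)) - 1) * t (2+p) (1+c))/2 := by
      linarith
    rw [h2, show (c:ℚ) * c.factorial + c.factorial = ((c:ℚ)+1)*c.factorial by ring,
      show (c:ℚ) * c.factorial * 3 + (c:ℚ)^2 * c.factorial + (c.factorial:ℚ) * 2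
        = ((c:ℚ)+1)*((c:ℚ)+2)*c.factorial by ring]
    field_simp
    ring
end

section
/- Let t_{n,k,ℓ} be defined by t_{n,0,1}=1, t_{n,0,ℓ}=0 for ℓ > 1, and t_{n,k,ℓ} = (ℓ−2)·t_{n,k−1,ℓ−2} + (n−k)·t_{n+1,k−1,ℓ−1}. Then for 0 < k < n, summing over all positions ℓ recovers the total count: Σ_ℓ t_{n,k,ℓ} = t_{n,k}, where t_{n,k} satisfies t_{n,0}=1 and 2·t_{n,k} = (n+2k−1)·t_{n,k−1} + (n−k)·t_{n+1,k−1}. -/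
/-- `t_{n,k,ℓ}`: the refined recurrence `t_{n,0,1} = 1`, `t_{n,0,ℓ} = 0` for `ℓ ≠ 1`,
`t_{n,k,ℓ} = (ℓ−2)·t_{n,k−1,ℓ−2} + (n−k)·t_{n+1,k−1,ℓ−1}`. -/
def t3 : ℕ → ℕ → ℕ → ℚ
  | _, 0, l => if l = 1 then 1 else 0
  | n, k+1, l => ((l:ℚ) - 2) * t3 n k (l - 2) + ((n:ℚ) - (k+1)) * t3 (n+1) k (l - 1)

set_option maxHeartbeats 1000000

lemma t3_succ (n k l : ℕ) : t3 n (k+1) l = ((l:ℚ) - 2) * t3 n k (l - 2) + ((n:ℚ) - (k+1)) * t3 (n+1) k (l - 1) := rfl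
lemma t3_base (n l : ℕ) : t3 n 0 l = if l = 1 then 1 else 0 := rfl
lemma t3_zero : ∀ k n, t3 n k 0 = 0
  | 0, n => by simp [t3_base]
  | k+1, n => by rw [t3_succ]; simp [t3_zero k]
lemma t3_one_mul (n k : ℕ) : (k:ℚ) * t3 n k 1 = 0 := by
  cases k with
  | zero => simp
  | succ k => rw [t3_succ]; simp [t3_zero]
lemma t3_supp : ∀ k n l, 2*k+2 ≤ l → t3 n k l = 0
  | 0, n, l, h => by
      have : l ≠ 1 := by omega
      simp [t3_base, this]
  | k+1, n, l, h => by
      rw [t3_succ, t3_supp k n (l-2) (by omega), t3_supp k (n+1) (l-1) (by omega)]; ring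


lemma key_i2 : ∀ k n m : ℕ,
    (2*(m:ℚ)*t3 n k m - ((n:ℚ)+2*k+1)*t3 n k (m+1) - 2*(m:ℚ)*t3 (n+1) k m
      + ((n:ℚ)+5*m-4*k+1)*t3 (n+1) k (m+1) - 3*((m:ℚ)+1-k)*t3 (n+1) k (m+2) = 0)
    ∧ (((n:ℚ)+2*k-2*m+1)*t3 n k m + ((n:ℚ)+2*k-m+2)*t3 (n+1) k m
      + 3*((k:ℚ)-m)*t3 (n+1) k (m+1) + 2*((k:ℚ)-n)*t3 (n+2) k m = 0) := by
  intro k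
  induction k with
  | zero =>
    intro n m
    refine ⟨?_, ?_⟩
    · match m with
      | 0 => simp [t3_base]; try ring
      | 1 => simp [t3_base]; try ring
      | (s+2) => simp [t3_base]
    · match m with
      | 0 => simp [t3_base]; try ring
      | 1 => simp [t3_base]; try ring
      | (s+2) => simp [t3_base]
  | succ k ih =>
    have hK : ∀ n m : ℕ, 2*(m:ℚ)*t3 n k m - ((n:ℚ)+2*k+1)*t3 n k (m+1) - 2*(m:ℚ)*t3 (n+1) k m
        + ((n:ℚ)+5*m-4*k+1)*t3 (n+1) k (m+1) - 3*((m:ℚ)+1-k)*t3 (n+1) k (m+2) = 0 :=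
      fun n m => (ih n m).1
    have hI : ∀ n m : ℕ, ((n:ℚ)+2*k-2*m+1)*t3 n k m + ((n:ℚ)+2*k-m+2)*t3 (n+1) k m
        + 3*((k:ℚ)-m)*t3 (n+1) k (m+1) + 2*((k:ℚ)-n)*t3 (n+2) k m = 0 :=
      fun n m => (ih n m).2
    have hz : ∀ N : ℕ, t3 N k 0 = 0 := t3_zero k
    intro n m
    refine ⟨?_, ?_⟩
    · match m with
      | 0 =>
        simp only [t3_succ]
        norm_num
        linear_combination (norm := (push_cast; ring1)) (-(n:ℚ)/4 + (k:ℚ)/4 + (n:ℚ)^2/4 + (n:ℚ)*k/4 - (k:ℚ)^2/2) * hK n 0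
          + (-(3:ℚ)*n/4 + 3*(k:ℚ)/4 + (n:ℚ)^2/4 + (n:ℚ)*k/4 - (k:ℚ)^2/2) * hK (n+1) 0
          + (-(3:ℚ)*n/4 + 3*(k:ℚ)/4 + 3*(n:ℚ)*k/4 - 3*(k:ℚ)^2/4) * hK (n+1) 1
          + (-(n:ℚ)/2 + (k:ℚ)/2 - (n:ℚ)^2/2 + (n:ℚ)*k - (k:ℚ)^2/2) * hK (n+2) 0
          + ((k:ℚ) - n) * hI n 0
          + ((n:ℚ)/4 - (k:ℚ)/4 + (n:ℚ)^2/4 + (n:ℚ)*k/4 - (k:ℚ)^2/2) * hI n 1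
          + (-(3:ℚ)*n/4 + 3*(k:ℚ)/4 - (n:ℚ)^2/4 + 5*(n:ℚ)*k/4 - (k:ℚ)^2) * hI (n+1) 1
          + ((3:ℚ)*n/4 - 3*(k:ℚ)/4 - 3*(n:ℚ)*k/4 + 3*(k:ℚ)^2/4) * hI (n+1) 2
          + ((3:ℚ) + 2*n + k + (n:ℚ)^2 + (n:ℚ)*k - 2*(k:ℚ)^2) * hz n
          + ((6:ℚ) - n + 7*k) * hz (n+1)
          + (-(3:ℚ)*n + 3*k - (n:ℚ)^2 - (n:ℚ)*k + 2*(k:ℚ)^2) * hz (n+2)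
      | 1 =>
        simp only [t3_succ]
        norm_num
        linear_combination (norm := (push_cast; ring1)) ((n:ℚ) - k) * hK (n+1) 0 + 2 * hI n 0
          + (-(4:ℚ) - 2*n - 4*k) * hz n + (-(4:ℚ) - 6*k) * hz (n+1) + (2*(n:ℚ) - 2*k) * hz (n+2)
      | (s+2) =>
        have e1 : s+2-2 = s := by omega
        have e2 : s+2+1-2 = s+1 := by omega
        have e3 : s+2+2-2 = s+2 := by omega
        have e4 : s+2-1 = s+1 := by omega
        have e5 : s+2+1-1 = s+2 := by omega
        have e6 : s+2+2-1 = s+2+1 := by omega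
        simp only [t3_succ, e1, e2, e3, e4, e5, e6]
        push_cast
        linear_combination (norm := (push_cast; ring1)) ((s:ℚ)+2) * hK n s + ((n:ℚ)-k) * hK (n+1) (s+1) + hI n (s+1)
    · match m with
      | 0 =>
        simp only [t3_succ]
        norm_num
        linear_combination (norm := (push_cast; ring1)) (-(1:ℚ)/4 + (n:ℚ)/2 + (k:ℚ)/4 - (n:ℚ)^2/4 - (n:ℚ)*k/4 + (k:ℚ)^2/2) * hK n 0
          + (-(3:ℚ)/4 + (n:ℚ) - (k:ℚ)/4 - (n:ℚ)^2/4 - (n:ℚ)*k/4 + (k:ℚ)^2/2) * hK (n+1) 0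
          + (-(3:ℚ)/4 + 3*(n:ℚ)/4 - 3*(n:ℚ)*k/4 + 3*(k:ℚ)^2/4) * hK (n+1) 1
          + (-(1:ℚ)/2 + (n:ℚ)^2/2 - (n:ℚ)*k + (k:ℚ)^2/2) * hK (n+2) 0
          + (-(1:ℚ) + n - k) * hI n 0
          + ((1:ℚ)/4 + 3*(k:ℚ)/4 - (n:ℚ)^2/4 - (n:ℚ)*k/4 + (k:ℚ)^2/2) * hI n 1
          + (-(1:ℚ) + n - k) * hI (n+1) 0
          + (-(3:ℚ)/4 + (n:ℚ)/2 + (k:ℚ)/4 + (n:ℚ)^2/4 - 5*(n:ℚ)*k/4 + (k:ℚ)^2) * hI (n+1) 1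
          + ((3:ℚ)/4 - 3*(n:ℚ)/4 + 3*(n:ℚ)*k/4 - 3*(k:ℚ)^2/4) * hI (n+1) 2
          + (-(5:ℚ) - 2*n - k - (n:ℚ)^2 - (n:ℚ)*k + 2*(k:ℚ)^2) * hz n
          + (-(10:ℚ) - 2*n - 4*k - (n:ℚ)^2 - (n:ℚ)*k + 2*(k:ℚ)^2) * hz (n+1)
          + (-(1:ℚ) + 7*n - 4*k + 2*(n:ℚ)^2 - (n:ℚ)*k - (k:ℚ)^2) * hz (n+2)
      | 1 =>
        simp only [t3_succ]
        norm_num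
        linear_combination (norm := (push_cast; ring1)) (-(1:ℚ)/4 + (n:ℚ)/4 + (k:ℚ)/2) * hK n 0
          + (-(3:ℚ)/4 + (n:ℚ)/4 + (k:ℚ)/2) * hK (n+1) 0
          + (-(3:ℚ)/4 + 3*(k:ℚ)/4) * hK (n+1) 1
          + (-(1:ℚ)/2 - (n:ℚ)/2 + (k:ℚ)/2) * hK (n+2) 0
          + (-(1:ℚ)) * hI n 0
          + ((1:ℚ)/4 + (n:ℚ)/4 + (k:ℚ)/2) * hI n 1
          + (-(1:ℚ) + n - k) * hI (n+1) 0
          + (-(3:ℚ)/4 - (n:ℚ)/4 + k) * hI (n+1) 1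
          + ((3:ℚ)/4 - 3*(k:ℚ)/4) * hI (n+1) 2
          + (-(n:ℚ) + k) * hz (n+1)
          + ((1:ℚ) + n + 2*k) * hz (n+2)
      | (s+2) =>
        have e1 : s+2-2 = s := by omega
        have e2 : s+2+1-2 = s+1 := by omega
        have e4 : s+2-1 = s+1 := by omega
        have e5 : s+2+1-1 = s+2 := by omega
        simp only [t3_succ, e1, e2, e4, e5]
        push_cast
        linear_combination (norm := (push_cast; ring1)) (-(1:ℚ)/2 + (n:ℚ)/2 + k - s) * hK n s
          + (-(1:ℚ)/2 + (n:ℚ)/2 + k - (s:ℚ)/2) * hK (n+1) s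
          + (-(3:ℚ)/2 + 3*(k:ℚ)/2 - 3*(s:ℚ)/2) * hK (n+1) (s+1)
          + (-(1:ℚ) - n + k) * hK (n+2) s
          + ((1:ℚ)/2 + (n:ℚ)/2 + k) * hI n (s+1)
          + (s:ℚ) * hI (n+1) s
          + (-(5:ℚ)/2 + (n:ℚ)/2 + k - 5*(s:ℚ)/2) * hI (n+1) (s+1)
          + ((3:ℚ)/2 - 3*(k:ℚ)/2 + 3*(s:ℚ)/2) * hI (n+1) (s+2)

def S (n k : ℕ) : ℚ := ∑ l ∈ Finset.range (2*k+2), t3 n k l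
def W (n k : ℕ) : ℚ := ∑ l ∈ Finset.range (2*k+2), (l:ℚ) * t3 n k l

lemma sumshift (F : ℕ → ℚ) (B : ℕ) (h0 : F 0 = 0) (hB : F B = 0) :
    ∑ m ∈ Finset.range B, F (m+1) = ∑ m ∈ Finset.range B, F m := by
  have h := Finset.sum_range_succ' F B
  rw [Finset.sum_range_succ] at h
  rw [h0, hB] at h
  linarith

lemma S_rec (n k : ℕ) : S n (k+1) = W n k + ((n:ℚ)-(k+1)) * S (n+1) k := by
  unfold S W
  rw [show 2*(k+1)+2 = (2*k+2)+1+1 by ring]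
  rw [Finset.sum_range_succ', Finset.sum_range_succ']
  have hz0 : t3 n (k+1) 0 = 0 := t3_zero (k+1) n
  have hz1 : t3 n (k+1) (0+1) = 0 := by rw [t3_succ]; simp [t3_zero]
  rw [hz0, hz1]
  have hcong : ∀ m ∈ Finset.range (2*k+2), t3 n (k+1) (m+1+1)
      = (m:ℚ) * t3 n k m + ((n:ℚ)-(k+1)) * t3 (n+1) k (m+1) := by
    intro m _
    rw [t3_succ]
    have e1 : m+1+1-2 = m := by omega
    have e2 : m+1+1-1 = m+1 := by omega
    rw [e1, e2]
    push_cast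
    ring
  rw [Finset.sum_congr rfl hcong, Finset.sum_add_distrib, ← Finset.mul_sum]
  rw [sumshift (t3 (n+1) k) (2*k+2) (t3_zero k (n+1)) (t3_supp k (n+1) (2*k+2) le_rfl)]
  ring

lemma W_id (n k : ℕ) : 2 * W n k = ((n:ℚ)+2*k+1) * S n k - ((n:ℚ)-k-1) * S (n+1) k := by
  have h0 : ∑ m ∈ Finset.range (2*k+2), (2*(m:ℚ)*t3 n k m - ((n:ℚ)+2*k+1)*t3 n k (m+1)
      - 2*(m:ℚ)*t3 (n+1) k m + ((n:ℚ)+5*m-4*k+1)*t3 (n+1) k (m+1)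
      - 3*((m:ℚ)+1-k)*t3 (n+1) k (m+2)) = 0 :=
    Finset.sum_eq_zero fun m _ => (key_i2 k n m).1
  set B := 2*k+2 with hB
  have A2 : ∑ m ∈ Finset.range B, t3 n k (m+1) = S n k :=
    sumshift (t3 n k) B (t3_zero k n) (t3_supp k n B le_rfl)
  have A3 : ∑ m ∈ Finset.range B, t3 (n+1) k (m+1) = S (n+1) k :=
    sumshift (t3 (n+1) k) B (t3_zero k (n+1)) (t3_supp k (n+1) B le_rfl)
  have A4 : ∑ m ∈ Finset.range B, (m:ℚ) * t3 (n+1) k (m+1) = W (n+1) k - S (n+1) k := by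
    have hsh : ∑ m ∈ Finset.range B, (((m+1:ℕ):ℚ)-1) * t3 (n+1) k (m+1)
        = ∑ m ∈ Finset.range B, ((m:ℚ)-1) * t3 (n+1) k m :=
      sumshift (fun j => ((j:ℚ)-1) * t3 (n+1) k j) B (by simp [t3_zero])
        (by simp [t3_supp k (n+1) B le_rfl])
    calc ∑ m ∈ Finset.range B, (m:ℚ) * t3 (n+1) k (m+1)
        = ∑ m ∈ Finset.range B, (((m+1:ℕ):ℚ)-1) * t3 (n+1) k (m+1) :=
          Finset.sum_congr rfl (fun m _ => by push_cast; ring)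
      _ = ∑ m ∈ Finset.range B, ((m:ℚ)-1) * t3 (n+1) k m := hsh
      _ = W (n+1) k - S (n+1) k := by
          unfold W S
          rw [← Finset.sum_sub_distrib]
          exact Finset.sum_congr rfl fun m _ => by ring
  have A5 : ∑ m ∈ Finset.range B, ((m:ℚ)+1-k) * t3 (n+1) k (m+2)
      = W (n+1) k - (1+(k:ℚ)) * S (n+1) k := by
    have hsh1 : ∑ m ∈ Finset.range B, (((m+1:ℕ):ℚ)-(k:ℚ)) * t3 (n+1) k (m+2)
        = ∑ m ∈ Finset.range B, ((m:ℚ)-(k:ℚ)) * t3 (n+1) k (m+1) :=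
      sumshift (fun j => ((j:ℚ)-(k:ℚ)) * t3 (n+1) k (j+1)) B
        (by simp [t3_one_mul])
        (by simp [t3_supp k (n+1) (B+1) (by omega)])
    have hsh2 : ∑ m ∈ Finset.range B, (((m+1:ℕ):ℚ)-1-(k:ℚ)) * t3 (n+1) k (m+1)
        = ∑ m ∈ Finset.range B, ((m:ℚ)-1-(k:ℚ)) * t3 (n+1) k m :=
      sumshift (fun j => ((j:ℚ)-1-(k:ℚ)) * t3 (n+1) k j) B (by simp [t3_zero])
        (by simp [t3_supp k (n+1) B le_rfl])
    calc ∑ m ∈ Finset.range B, ((m:ℚ)+1-k) * t3 (n+1) k (m+2)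
        = ∑ m ∈ Finset.range B, (((m+1:ℕ):ℚ)-(k:ℚ)) * t3 (n+1) k (m+2) :=
          Finset.sum_congr rfl (fun m _ => by push_cast; ring)
      _ = ∑ m ∈ Finset.range B, ((m:ℚ)-(k:ℚ)) * t3 (n+1) k (m+1) := hsh1
      _ = ∑ m ∈ Finset.range B, (((m+1:ℕ):ℚ)-1-(k:ℚ)) * t3 (n+1) k (m+1) :=
          Finset.sum_congr rfl (fun m _ => by push_cast; ring)
      _ = ∑ m ∈ Finset.range B, ((m:ℚ)-1-(k:ℚ)) * t3 (n+1) k m := hsh2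
      _ = W (n+1) k - (1+(k:ℚ)) * S (n+1) k := by
          unfold W S
          rw [Finset.mul_sum, ← Finset.sum_sub_distrib]
          exact Finset.sum_congr rfl fun m _ => by ring
  have expand : ∑ m ∈ Finset.range B, (2*(m:ℚ)*t3 n k m - ((n:ℚ)+2*k+1)*t3 n k (m+1)
      - 2*(m:ℚ)*t3 (n+1) k m + ((n:ℚ)+5*m-4*k+1)*t3 (n+1) k (m+1)
      - 3*((m:ℚ)+1-k)*t3 (n+1) k (m+2))
      = 2 * W n k - ((n:ℚ)+2*k+1) * (∑ m ∈ Finset.range B, t3 n k (m+1))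
        - 2 * W (n+1) k
        + (((n:ℚ)-4*k+1) * (∑ m ∈ Finset.range B, t3 (n+1) k (m+1))
           + 5 * (∑ m ∈ Finset.range B, (m:ℚ) * t3 (n+1) k (m+1)))
        - 3 * (∑ m ∈ Finset.range B, ((m:ℚ)+1-k) * t3 (n+1) k (m+2)) := by
    unfold W
    rw [← hB]
    simp only [Finset.mul_sum, ← Finset.sum_add_distrib, ← Finset.sum_sub_distrib]
    exact Finset.sum_congr rfl fun m _ => by ring
  rw [expand, A2, A3, A4, A5] at h0
  linarith

lemma S_eq_t : ∀ k n, S n k = t n k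
  | 0, n => by
      unfold S
      rw [show 2*0+2 = 2 by ring]
      rw [Finset.sum_range_succ, Finset.sum_range_succ, Finset.sum_range_zero]
      simp [t3_base, t]
  | k+1, n => by
      have h1 := S_rec n k
      have h2 := W_id n k
      rw [S_eq_t k n, S_eq_t k (n+1)] at h2
      rw [S_eq_t k (n+1)] at h1
      rw [show t n (k+1) = (((n:ℚ) + 2*(k+1) - 1) * t n k + ((n:ℚ) - (k+1)) * t (n+1) k) / 2 from rfl]
      linear_combination (norm := (push_cast; ring1)) h1 + h2 / 2


/-- For `0 < k < n`, summing `t_{n,k,ℓ}` over all positions `ℓ` recovers `t_{n,k}`. -/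
theorem t3_sum (n k : ℕ) (hk : 0 < k) (hkn : k < n) :
    ∑ᶠ l : ℕ, t3 n k l = t n k := by
  rw [finsum_eq_sum_of_support_subset (t3 n k) (s := Finset.range (2*k+2))
    (fun l hl => by
      simp only [Finset.coe_range, Set.mem_Iio]
      by_contra h
      exact hl (t3_supp k n l (by omega)))]
  exact S_eq_t k n
end

section
/- Let t_{n,k,ℓ} be defined by t_{n,0,1}=1, t_{n,0,ℓ}=0 for ℓ ≠ 1, and t_{n,k,ℓ} = (ℓ−2)·t_{n,k−1,ℓ−2} + (n−k)·t_{n+1,k−1,ℓ−1} for k ≥ 1. Then for 0 < k < n, t_{n,k,ℓ} = 0 unless k+1 ≤ ℓ ≤ 2k+1. -/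
lemma t3_support_aux (k : ℕ) : ∀ n l : ℕ, ¬(k + 1 ≤ l ∧ l ≤ 2*k + 1) → t3 n k l = 0 := by
  induction k with
  | zero =>
    intro n l hl
    simp only [t3]
    rw [if_neg]
    omega
  | succ k ih =>
    intro n l hl
    simp only [t3]
    rw [ih n (l - 2) (by omega), ih (n+1) (l - 1) (by omega)]
    ring

/-- For `0 < k < n`, `t_{n,k,ℓ} = 0` unless `k+1 ≤ ℓ ≤ 2k+1`. -/
theorem t3_support (n k l : ℕ) (hk : 0 < k) (hkn : k < n)
    (hl : ¬(k + 1 ≤ l ∧ l ≤ 2*k + 1)) : t3 n k l = 0 :=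
  t3_support_aux k n l hl
end
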